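/- For every online interval-selection algorithm A with revocable acceptances and every k ≥ 1, there exists a finite list σ of intervals with at most k distinct lengths such that |A(σ)| ≤ 1 and opt(σ) ≥ 2k. (That is, no deterministic algorithm achieves a competitive ratio better than 2k for unweighted interval selection with revocable decisions and k different lengths.) -/

import Mathlib

open scoped Classical

/-- An interval: a pair `(s, f)` of reals with `s < f`, identified with `[s, f) ⊆ ℝ`. -/
structure Ivl where
  s : ℝ
  f : ℝ
  lt : s < f

namespace Ivl

noncomputable instance : DecidableEq Ivl := fun a b =>
  decidable_of_iff (a.s = b.s ∧ a.f = b.f) (by cases a; cases b; simp)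

/-- The set of points covered by an interval. -/
def toSet (I : Ivl) : Set ℝ := Set.Ico I.s I.f

/-- The length of an interval. -/
def length (I : Ivl) : ℝ := I.f - I.s

/-- Two intervals conflict if their point sets intersect. -/
def Conflict (I J : Ivl) : Prop := (I.toSet ∩ J.toSet).Nonempty

/-- A finite set of intervals is feasible (pairwise disjoint) if no two distinct members
conflict. -/
def Feasible (S : Finset Ivl) : Prop :=
  ∀ I ∈ S, ∀ J ∈ S, I ≠ J → ¬ Conflict I J

end Ivl

/-- An online interval-selection algorithm with revocable acceptances: a function from finite
lists of intervals to finite sets of intervals such that the output consists of intervals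
occurring in the input, is pairwise disjoint, and each new output is contained in the previous
output together with the newly arrived interval. -/
structure OnlineAlg where
  run : List Ivl → Finset Ivl
  mem_of_run : ∀ σ : List Ivl, ∀ I ∈ run σ, I ∈ σ
  feasible_run : ∀ σ : List Ivl, Ivl.Feasible (run σ)
  revocable : ∀ (σ : List Ivl) (I : Ivl), run (σ ++ [I]) ⊆ insert I (run σ)

/-- `opt σ` is the maximum cardinality of a pairwise-disjoint finite set of intervals all of
which occur in `σ`. -/
noncomputable def opt (σ : List Ivl) : ℕ :=
  (σ.toFinset.powerset.filter (fun T => Ivl.Feasible T)).sup Finset.card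

/-!
The adversary keeps the algorithm holding at most one interval and *banks* pairwise disjoint
intervals of the input that the algorithm does not hold, so that `opt` is at least the number
banked. It uses lengths `ℓ₀ > ℓ₁ > ⋯ > ℓ_{k-1}`, each much smaller than the previous one.
When the algorithm holds an interval `X` of length `ℓⱼ`, the adversary offers shifts of `X` by
`±3ℓⱼ/4`, one at a time. If the algorithm drops everything, `X` is banked and play restarts at
level `0` beyond all banked intervals. If it switches to a shift, the adversary marches on in
that direction, banking the abandoned predecessor every other step. If it clings to `X`, the
offered shifts (and an unbanked predecessor) are banked, and play continues at level `j + 1`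
inside the middle half of `X`, which all of them avoid. The budget `n + 2j ≤ 2k`, with `n` the
number of intervals still to be banked, shows that every level yields two of them.
-/

namespace Ivl

theorem ext {I J : Ivl} (hs : I.s = J.s) (hf : I.f = J.f) : I = J := by
  cases I; cases J; simp_all

theorem conflict_iff {I J : Ivl} : I.Conflict J ↔ I.s < J.f ∧ J.s < I.f := by
  simp only [Conflict, toSet, Set.Ico_inter_Ico, Set.nonempty_Ico, lt_min_iff, max_lt_iff]
  exact ⟨fun h => ⟨h.2.1, h.1.2⟩, fun h => ⟨⟨I.lt, h.2⟩, h.1, J.lt⟩⟩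

theorem conflict_comm {I J : Ivl} : I.Conflict J ↔ J.Conflict I := by
  rw [conflict_iff, conflict_iff, and_comm]

def reflect (I : Ivl) : Ivl := ⟨-I.f, -I.s, neg_lt_neg I.lt⟩

@[simp] theorem reflect_s (I : Ivl) : I.reflect.s = -I.f := rfl
@[simp] theorem reflect_f (I : Ivl) : I.reflect.f = -I.s := rfl

theorem reflect_reflect (I : Ivl) : I.reflect.reflect = I := ext (neg_neg _) (neg_neg _)

theorem reflect_conflict_reflect {I J : Ivl} : I.reflect.Conflict J.reflect ↔ I.Conflict J := by
  simp only [conflict_iff, reflect_s, reflect_f, neg_lt_neg_iff, and_comm]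

theorem length_reflect (I : Ivl) : I.reflect.length = I.length := by
  simp only [length, reflect_s, reflect_f, neg_sub_neg]

def reflectEquiv : Ivl ≃ Ivl := Function.Involutive.toPerm reflect reflect_reflect

end Ivl

def Avoids (S : Finset Ivl) (a b : ℝ) : Prop := ∀ I ∈ S, I.f ≤ a ∨ b ≤ I.s

section Avoids

variable {S : Finset Ivl} {a b : ℝ}

theorem Avoids.mono {a' b' : ℝ} (h : Avoids S a b) (ha : a ≤ a') (hb : b' ≤ b) : Avoids S a' b' :=
  fun I hI => (h I hI).imp (fun h => h.trans ha) (fun h => hb.trans h)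

theorem Avoids.not_conflict {I : Ivl} (h : Avoids S I.s I.f) : ∀ J ∈ S, ¬ I.Conflict J := by
  intro J hJ hIJ
  rw [Ivl.conflict_iff] at hIJ
  rcases h J hJ with h' | h' <;> linarith [hIJ.1, hIJ.2]

theorem Avoids.card_insert {I : Ivl} (h : Avoids S I.s I.f) : (insert I S).card = S.card + 1 :=
  Finset.card_insert_of_notMem fun hI => h.not_conflict I hI (Ivl.conflict_iff.2 ⟨I.lt, I.lt⟩)

theorem Avoids.image_reflect (h : Avoids S a b) : Avoids (S.image Ivl.reflect) (-b) (-a) := by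
  simp only [Avoids, Finset.forall_mem_image, Ivl.reflect_s, Ivl.reflect_f, neg_le_neg_iff]
  exact fun I hI => (h I hI).symm

theorem Avoids.insert {I : Ivl} (h : Avoids S a b) (hI : I.f ≤ a ∨ b ≤ I.s) :
    Avoids (insert I S) a b :=
  Finset.forall_mem_insert _ _ _ |>.2 ⟨hI, h⟩

end Avoids

def IsPacking (σ : List Ivl) (S : Finset Ivl) : Prop := Ivl.Feasible S ∧ ∀ I ∈ S, I ∈ σ

section IsPacking

variable {σ : List Ivl} {S : Finset Ivl}

theorem IsPacking.card_le_opt (h : IsPacking σ S) : S.card ≤ opt σ :=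
  Finset.le_sup (Finset.mem_filter.2
    ⟨Finset.mem_powerset.2 fun I hI => List.mem_toFinset.2 (h.2 I hI), h.1⟩)

theorem IsPacking.append (h : IsPacking σ S) (τ : List Ivl) : IsPacking (σ ++ τ) S :=
  ⟨h.1, fun I hI => List.mem_append_left τ (h.2 I hI)⟩

theorem IsPacking.map_equiv (h : IsPacking σ S) (e : Ivl ≃ Ivl)
    (he : ∀ I J, (e I).Conflict (e J) ↔ I.Conflict J) : IsPacking (σ.map e) (S.image e) := by
  refine ⟨?_, Finset.forall_mem_image.2 fun I hI => List.mem_map_of_mem (h.2 I hI)⟩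
  simp only [Ivl.Feasible, Finset.forall_mem_image, he]
  exact fun I hI J hJ hIJ => h.1 I hI J hJ (ne_of_apply_ne e hIJ)

theorem IsPacking.insert_of_mem {I : Ivl} (h : IsPacking σ S) (hI : I ∈ σ)
    (hfree : Avoids S I.s I.f) : IsPacking σ (insert I S) := by
  refine ⟨?_, Finset.forall_mem_insert _ _ _ |>.2 ⟨hI, h.2⟩⟩
  intro J hJ K hK hJK
  rcases Finset.mem_insert.1 hJ with rfl | hJ <;> rcases Finset.mem_insert.1 hK with hKI | hK
  · exact absurd hKI.symm hJK
  · exact hfree.not_conflict K hK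
  · rw [hKI, Ivl.conflict_comm]
    exact hfree.not_conflict J hJ
  · exact h.1 J hJ K hK hJK

theorem IsPacking.append_insert {I : Ivl} (h : IsPacking σ S) (hfree : Avoids S I.s I.f) :
    IsPacking (σ ++ [I]) (insert I S) :=
  (h.append [I]).insert_of_mem (List.mem_append_right σ (List.mem_singleton_self I)) hfree

end IsPacking

theorem opt_le_opt_map_equiv (σ : List Ivl) (e : Ivl ≃ Ivl)
    (he : ∀ I J, (e I).Conflict (e J) ↔ I.Conflict J) : opt σ ≤ opt (σ.map e) := by
  refine Finset.sup_le fun T hT => ?_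
  obtain ⟨hTσ, hT⟩ := Finset.mem_filter.1 hT
  have hpack : IsPacking σ T :=
    ⟨hT, fun I hI => List.mem_toFinset.1 (Finset.mem_powerset.1 hTσ hI)⟩
  rw [← Finset.card_image_of_injective T e.injective]
  exact (hpack.map_equiv e he).card_le_opt

namespace OnlineAlg

variable (A : OnlineAlg) {σ : List Ivl} {I X : Ivl}

theorem run_nil : A.run [] = ∅ :=
  Finset.eq_empty_of_forall_notMem fun I hI => List.not_mem_nil (A.mem_of_run [] I hI)

theorem run_append_eq_singleton (hI : I ∈ A.run (σ ++ [I]))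
    (hconf : ∀ Y ∈ A.run σ, I.Conflict Y) : A.run (σ ++ [I]) = {I} := by
  refine Finset.eq_singleton_iff_unique_mem.2 ⟨hI, fun Y hY => ?_⟩
  by_contra hYI
  rcases Finset.mem_insert.1 (A.revocable σ I hY) with rfl | hYσ
  · exact hYI rfl
  · exact A.feasible_run _ I hI Y hY (Ne.symm hYI) (hconf Y hYσ)

theorem run_append_of_conflict (hrun : A.run σ = {X}) (hI : I.Conflict X) :
    A.run (σ ++ [I]) = ∅ ∨ A.run (σ ++ [I]) = {X} ∨ A.run (σ ++ [I]) = {I} := by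
  by_cases hheld : I ∈ A.run (σ ++ [I])
  · exact Or.inr <| Or.inr <| A.run_append_eq_singleton hheld (by simpa [hrun] using hI)
  · have hsub := (Finset.subset_insert_iff_of_notMem hheld).1 (A.revocable σ I)
    rw [hrun] at hsub
    exact (Finset.subset_singleton_iff.1 hsub).imp_right Or.inl

noncomputable def conj (e : Ivl ≃ Ivl) (he : ∀ I J, (e I).Conflict (e J) ↔ I.Conflict J) :
    OnlineAlg where
  run σ := (A.run (σ.map e.symm)).image e
  mem_of_run σ I hI := by
    obtain ⟨J, hJ, rfl⟩ := Finset.mem_image.1 hI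
    obtain ⟨K, hK, rfl⟩ := List.mem_map.1 (A.mem_of_run _ J hJ)
    simpa using hK
  feasible_run σ := by
    simp only [Ivl.Feasible, Finset.forall_mem_image, he]
    exact fun I hI J hJ hIJ => A.feasible_run _ I hI J hJ (ne_of_apply_ne e hIJ)
  revocable σ I := by
    intro Y hY
    obtain ⟨Z, hZ, rfl⟩ := Finset.mem_image.1 hY
    rw [List.map_append, List.map_singleton] at hZ
    rcases Finset.mem_insert.1 (A.revocable _ _ hZ) with rfl | hZ
    · simp
    · exact Finset.mem_insert_of_mem (Finset.mem_image_of_mem e hZ)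

theorem conj_run_map (e : Ivl ≃ Ivl) (he : ∀ I J, (e I).Conflict (e J) ↔ I.Conflict J)
    (σ : List Ivl) : (A.conj e he).run (σ.map e) = (A.run σ).image e := by
  simp [conj, List.map_map]

end OnlineAlg

def Wins (A : OnlineAlg) (L : Finset ℝ) (σ : List Ivl) (m : ℕ) : Prop :=
  ∃ τ : List Ivl, (∀ I ∈ τ, I.length ∈ L) ∧ (A.run (σ ++ τ)).card ≤ 1 ∧ m ≤ opt (σ ++ τ)

section Wins

variable {A : OnlineAlg} {L : Finset ℝ} {σ : List Ivl} {m : ℕ}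

theorem IsPacking.wins {S : Finset Ivl} (h : IsPacking σ S) (hrun : (A.run σ).card ≤ 1) :
    Wins A L σ S.card :=
  ⟨[], by simp, by simpa using hrun, by simpa using h.card_le_opt⟩

theorem Wins.mono {m' : ℕ} (h : Wins A L σ m) (hm : m' ≤ m) : Wins A L σ m' :=
  let ⟨τ, hτ, hrun, hopt⟩ := h
  ⟨τ, hτ, hrun, hm.trans hopt⟩

theorem Wins.of_append {I : Ivl} (h : Wins A L (σ ++ [I]) m) (hI : I.length ∈ L) :
    Wins A L σ m := by
  obtain ⟨τ, hτ, hrun, hopt⟩ := h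
  have hσ : σ ++ I :: τ = σ ++ [I] ++ τ := by simp
  exact ⟨I :: τ, List.forall_mem_cons.2 ⟨hI, hτ⟩, hσ ▸ hrun, hσ ▸ hopt⟩

theorem Wins.of_conj (e : Ivl ≃ Ivl) (he : ∀ I J, (e I).Conflict (e J) ↔ I.Conflict J)
    (hlen : ∀ I, (e I).length = I.length) (h : Wins (A.conj e he) L (σ.map e) m) :
    Wins A L σ m := by
  obtain ⟨τ, hτ, hrun, hopt⟩ := h
  have hmap : σ.map e ++ τ = (σ ++ τ.map e.symm).map e := by simp [List.map_map]
  refine ⟨τ.map e.symm, ?_, ?_, ?_⟩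
  · intro I hI
    obtain ⟨J, hJ, rfl⟩ := List.mem_map.1 hI
    rw [← hlen, e.apply_symm_apply]
    exact hτ J hJ
  · rwa [hmap, OnlineAlg.conj_run_map, Finset.card_image_of_injective _ e.injective] at hrun
  · have h := opt_le_opt_map_equiv ((σ ++ τ.map e.symm).map e) e.symm
      (fun I J => by rw [← he, e.apply_symm_apply, e.apply_symm_apply])
    rw [List.map_map, e.symm_comp_self, List.map_id] at h
    exact hopt.trans (hmap ▸ h)

end Wins

namespace Adversary

/-- The ratio `32 (k + 1)²` of consecutive lengths is what makes a whole zone of the next level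
fit into the middle half of an interval (`succ_mul_pitch_succ_le`). -/
noncomputable def len (k j : ℕ) : ℝ := (32 * ((k : ℝ) + 1) ^ 2)⁻¹ ^ j

/-- The room a zone of level `j` must provide for each interval still to be banked in it. -/
noncomputable def pitch (k j : ℕ) : ℝ := (8 * k + 12) * len k j

noncomputable def levels (k : ℕ) : Finset ℝ := (Finset.range k).image (len k)

theorem len_pos (k j : ℕ) : 0 < len k j := by
  unfold len; positivity

theorem card_levels_le (k : ℕ) : (levels k).card ≤ k :=
  Finset.card_image_le.trans (Finset.card_range k).le

theorem radius_le_half_pitch {k n : ℕ} (j : ℕ) (hn : n ≤ 2 * k) :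
    (2 * (n : ℝ) + 6) * len k j ≤ pitch k j / 2 := by
  have hn' : (n : ℝ) ≤ 2 * k := by exact_mod_cast hn
  unfold pitch
  nlinarith [len_pos k j]

theorem succ_mul_pitch_succ_le {k m : ℕ} (j : ℕ) (hm : m ≤ 2 * k) :
    ((m : ℝ) + 1) * pitch k (j + 1) ≤ len k j / 2 := by
  have hm' : (m : ℝ) ≤ 2 * k := by exact_mod_cast hm
  have hlen : len k j = 32 * ((k : ℝ) + 1) ^ 2 * len k (j + 1) := by
    have hq : (32 * ((k : ℝ) + 1) ^ 2) ≠ 0 := by positivity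
    rw [len, len, pow_succ _ j, mul_left_comm, mul_inv_cancel₀ hq, mul_one]
  have hfactor : ((m : ℝ) + 1) * (8 * k + 12) ≤ 16 * ((k : ℝ) + 1) ^ 2 := by nlinarith
  rw [hlen, pitch]
  nlinarith [len_pos k (j + 1)]

noncomputable def seg (k j : ℕ) (x : ℝ) : Ivl :=
  ⟨x, x + len k j, lt_add_of_pos_right x (len_pos k j)⟩

@[simp] theorem seg_s (k j : ℕ) (x : ℝ) : (seg k j x).s = x := rfl
@[simp] theorem seg_f (k j : ℕ) (x : ℝ) : (seg k j x).f = x + len k j := rfl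

theorem length_seg_mem {k j : ℕ} (x : ℝ) (hj : j < k) : (seg k j x).length ∈ levels k :=
  Finset.mem_image.2 ⟨j, Finset.mem_range.2 hj, by simp [Ivl.length]⟩

theorem seg_conflict_seg {k j : ℕ} {x y : ℝ} (hxy : x < y + len k j) (hyx : y < x + len k j) :
    (seg k j x).Conflict (seg k j y) :=
  Ivl.conflict_iff.2 ⟨hxy, hyx⟩

theorem reflect_seg (k j : ℕ) (x : ℝ) : (seg k j x).reflect = seg k j (-(x + len k j)) :=
  Ivl.ext rfl (by simp)

theorem avoids_seg {S : Finset Ivl} {a b : ℝ} (k j : ℕ) {y : ℝ} (h : Avoids S a b) (ha : a ≤ y)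
    (hb : y + len k j ≤ b) : Avoids S (seg k j y).s (seg k j y).f :=
  h.mono ha hb

/-! Positions of the game at level `j`, where `S` is the banked set and `n` the number of
intervals still to be banked. Except in `ZoneWins`, the algorithm holds `seg k j x`; in
`SpareMarchWins` its unbanked predecessor is still available. -/

def ZoneWins (k n : ℕ) : Prop :=
  ∀ (A : OnlineAlg) (σ : List Ivl) (S : Finset Ivl) (j : ℕ) (a b : ℝ), IsPacking σ S →
    n + 2 * j ≤ 2 * k → (A.run σ).card ≤ 1 → (∀ Y ∈ A.run σ, Set.Ico a b ⊆ Y.toSet) →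
    Avoids S a b → ((n : ℝ) + 1) * pitch k j ≤ b - a → Wins A (levels k) σ (S.card + n)

def LatchWins (k n : ℕ) : Prop :=
  ∀ (A : OnlineAlg) (σ : List Ivl) (S : Finset Ivl) (j : ℕ) (x : ℝ), IsPacking σ S →
    n + 2 * j ≤ 2 * k → A.run σ = {seg k j x} →
    Avoids S (x - (2 * n + 6) * len k j) (x + (2 * n + 6) * len k j) →
    Wins A (levels k) σ (S.card + n)

def MarchWins (k n : ℕ) : Prop :=
  ∀ (A : OnlineAlg) (σ : List Ivl) (S : Finset Ivl) (j : ℕ) (x : ℝ), IsPacking σ S →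
    n + 1 + 2 * j ≤ 2 * k → A.run σ = {seg k j x} →
    Avoids S x (x + (2 * n + 6) * len k j) → Wins A (levels k) σ (S.card + n)

def SpareMarchWins (k n : ℕ) : Prop :=
  ∀ (A : OnlineAlg) (σ : List Ivl) (S : Finset Ivl) (j : ℕ) (x : ℝ), IsPacking σ S →
    n + 2 * j ≤ 2 * k → A.run σ = {seg k j x} → seg k j (x - 3 * len k j / 4) ∈ σ →
    Avoids S (x - 3 * len k j / 4) (x + (2 * n + 5) * len k j) →
    Wins A (levels k) σ (S.card + n)

section Moves

variable {k n : ℕ} {A : OnlineAlg} {σ : List Ivl} {S : Finset Ivl} {j : ℕ} {x : ℝ}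

theorem wins_of_run_eq_empty (hZ : ZoneWins k n) (hn : n ≤ 2 * k) (hS : IsPacking σ S)
    (hrun : A.run σ = ∅) : Wins A (levels k) σ (S.card + n) := by
  obtain ⟨R, hR⟩ := (S.image Ivl.f).bddAbove
  refine hZ A σ S 0 R (R + (n + 1) * pitch k 0) hS (by omega) (by simp [hrun]) (by simp [hrun])
    (fun I hI => Or.inl (hR (Finset.mem_coe.2 (Finset.mem_image_of_mem _ hI)))) (by linarith)

theorem wins_of_drop {X : Ivl} (hZ : ZoneWins k n) (hn : n ≤ 2 * k) (hS : IsPacking σ S)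
    (hX : X ∈ σ) (hXfree : Avoids S X.s X.f) (hrun : A.run σ = ∅) :
    Wins A (levels k) σ (S.card + (n + 1)) := by
  have h := wins_of_run_eq_empty hZ hn (hS.insert_of_mem hX hXfree) hrun
  rwa [hXfree.card_insert, add_right_comm, add_assoc] at h

theorem wins_of_descend (hZ : ZoneWins k n) (hslack : n + 2 * (j + 1) ≤ 2 * k)
    (hS : IsPacking σ S) (hrun : A.run σ = {seg k j x})
    (hfree : Avoids S (x + len k j / 4) (x + 3 * len k j / 4)) :
    Wins A (levels k) σ (S.card + n) := by
  have hℓ := len_pos k j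
  refine hZ A σ S (j + 1) _ _ hS hslack (by simp [hrun]) ?_ hfree ?_
  · simp only [hrun, Finset.mem_singleton, forall_eq, Ivl.toSet, seg_s, seg_f]
    exact Set.Ico_subset_Ico (by linarith) (by linarith)
  · linarith [succ_mul_pitch_succ_le (k := k) j (show n ≤ 2 * k by omega)]

theorem wins_of_march_left (hM : MarchWins k n) (hslack : n + 1 + 2 * j ≤ 2 * k)
    (hS : IsPacking σ S) (hrun : A.run σ = {seg k j x})
    (hfree : Avoids S (x + len k j - (2 * n + 6) * len k j) (x + len k j)) :
    Wins A (levels k) σ (S.card + n) := by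
  have he : ∀ I J, (Ivl.reflectEquiv I).Conflict (Ivl.reflectEquiv J) ↔ I.Conflict J :=
    fun _ _ => Ivl.reflect_conflict_reflect
  refine Wins.of_conj Ivl.reflectEquiv he Ivl.length_reflect ?_
  have h := hM (A.conj Ivl.reflectEquiv he) _ _ j (-(x + len k j)) (hS.map_equiv _ he) hslack
    (by rw [OnlineAlg.conj_run_map, hrun, Finset.image_singleton, Ivl.reflectEquiv]
        exact congrArg _ (reflect_seg k j x))
    (hfree.image_reflect.mono (by linarith) (by linarith))
  rwa [Finset.card_image_of_injective _ Ivl.reflectEquiv.injective] at h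

theorem wins_of_right_banked (hZ : ∀ m < n, ZoneWins k m) (hM : MarchWins k n)
    (hslack : n + 1 + 2 * j ≤ 2 * k) (hS : IsPacking σ S) (hrun : A.run σ = {seg k j x})
    (hfree : Avoids S (x - (2 * n + 6) * len k j) (x + 3 * len k j / 4)) :
    Wins A (levels k) σ (S.card + n) := by
  cases n with
  | zero => exact hS.wins (by simp [hrun])
  | succ n =>
  push_cast at hfree
  have hℓ := len_pos k j
  have hnℓ : 0 ≤ (n : ℝ) * len k j := by positivity
  have hMLfree := avoids_seg k j (y := x - 3 * len k j / 4) hfree (by linarith) (by linarith)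
  refine Wins.of_append (I := seg k j (x - 3 * len k j / 4)) ?_ (length_seg_mem _ (by omega))
  rcases A.run_append_of_conflict (I := seg k j (x - 3 * len k j / 4)) hrun
      (seg_conflict_seg (by linarith) (by linarith))
    with hdrop | hkeep | hswitch
  · exact wins_of_drop (hZ n (by omega)) (by omega) (hS.append _)
      (List.mem_append_right _ (List.mem_singleton_self _)) hMLfree hdrop
  · have h := wins_of_descend (hZ n (by omega)) (by omega) (hS.append_insert hMLfree) hkeep
      ((hfree.mono (by linarith) (by linarith)).insert (Or.inl (by rw [seg_f]; linarith)))
    exact h.mono (by rw [hMLfree.card_insert]; omega)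
  · exact wins_of_march_left hM hslack (hS.append _) hswitch
      (hfree.mono (by push_cast; linarith) (by linarith))

theorem latchWins (hZ : ∀ m < n, ZoneWins k m) (hM : ∀ m < n, MarchWins k m)
    (hT : SpareMarchWins k n) : LatchWins k n := by
  intro A σ S j x hS hslack hrun hfree
  cases n with
  | zero => exact hS.wins (by simp [hrun])
  | succ n =>
  push_cast at hfree
  have hℓ := len_pos k j
  have hnℓ : 0 ≤ (n : ℝ) * len k j := by positivity
  have hX : seg k j x ∈ σ := A.mem_of_run σ _ (by simp [hrun])
  refine Wins.of_append (I := seg k j (x + 3 * len k j / 4)) ?_ (length_seg_mem _ (by omega))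
  rcases A.run_append_of_conflict (I := seg k j (x + 3 * len k j / 4)) hrun
      (seg_conflict_seg (by linarith) (by linarith)) with hdrop | hkeep | hswitch
  · exact wins_of_drop (hZ n (by omega)) (by omega) (hS.append _) (List.mem_append_left _ hX)
      (avoids_seg k j hfree (by linarith) (by linarith)) hdrop
  · have hMRfree :=
      avoids_seg k j (y := x + 3 * len k j / 4) hfree (by linarith) (by linarith)
    have h := wins_of_right_banked (fun m hm => hZ m (by omega)) (hM n (by omega)) (by omega)
      (hS.append_insert hMRfree) hkeep
      ((hfree.mono (by linarith) (by linarith)).insert (Or.inr le_rfl))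
    exact h.mono (by rw [hMRfree.card_insert]; omega)
  · refine hT A _ S j _ (hS.append _) hslack hswitch ?_
      (hfree.mono (by linarith) (by push_cast; linarith))
    rw [add_sub_cancel_right]
    exact List.mem_append_left _ hX

theorem marchWins (hZ : ∀ m < n, ZoneWins k m) (hT : SpareMarchWins k n) : MarchWins k n := by
  intro A σ S j x hS hslack hrun hfree
  cases n with
  | zero => exact hS.wins (by simp [hrun])
  | succ n =>
  push_cast at hfree
  have hℓ := len_pos k j
  have hnℓ : 0 ≤ (n : ℝ) * len k j := by positivity
  have hX : seg k j x ∈ σ := A.mem_of_run σ _ (by simp [hrun])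
  refine Wins.of_append (I := seg k j (x + 3 * len k j / 4)) ?_ (length_seg_mem _ (by omega))
  rcases A.run_append_of_conflict (I := seg k j (x + 3 * len k j / 4)) hrun
      (seg_conflict_seg (by linarith) (by linarith)) with hdrop | hkeep | hswitch
  · exact wins_of_drop (hZ n (by omega)) (by omega) (hS.append _) (List.mem_append_left _ hX)
      (avoids_seg k j hfree (by linarith) (by linarith)) hdrop
  · have hMRfree :=
      avoids_seg k j (y := x + 3 * len k j / 4) hfree (by linarith) (by linarith)
    have h := wins_of_descend (hZ n (by omega)) (by omega)
      (hS.append_insert hMRfree) hkeep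
      ((hfree.mono (by linarith) (by linarith)).insert (Or.inr le_rfl))
    exact h.mono (by rw [hMRfree.card_insert]; omega)
  · refine hT A _ S j _ (hS.append _) (by omega) hswitch ?_
      (hfree.mono (by linarith) (by push_cast; linarith))
    rw [add_sub_cancel_right]
    exact List.mem_append_left _ hX

theorem spareMarchWins (hZ : ∀ m < n, ZoneWins k m) (hM : ∀ m < n, MarchWins k m) :
    SpareMarchWins k n := by
  intro A σ S j x hS hslack hrun hP hfree
  cases n with
  | zero => exact hS.wins (by simp [hrun])
  | succ n =>
  push_cast at hfree
  have hℓ := len_pos k j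
  have hnℓ : 0 ≤ (n : ℝ) * len k j := by positivity
  have hX : seg k j x ∈ σ := A.mem_of_run σ _ (by simp [hrun])
  have hPfree := avoids_seg k j (y := x - 3 * len k j / 4) hfree (by linarith) (by linarith)
  have hSP := hS.insert_of_mem hP hPfree
  refine Wins.of_append (I := seg k j (x + 3 * len k j / 4)) ?_ (length_seg_mem _ (by omega))
  rcases A.run_append_of_conflict (I := seg k j (x + 3 * len k j / 4)) hrun
      (seg_conflict_seg (by linarith) (by linarith)) with hdrop | hkeep | hswitch
  · exact wins_of_drop (hZ n (by omega)) (by omega) (hS.append _) (List.mem_append_left _ hX)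
      (avoids_seg k j hfree (by linarith) (by linarith)) hdrop
  · have hMRfree : Avoids (insert (seg k j (x - 3 * len k j / 4)) S)
        (seg k j (x + 3 * len k j / 4)).s (seg k j (x + 3 * len k j / 4)).f :=
      (avoids_seg k j hfree (by linarith) (by linarith)).insert
        (Or.inl (by simp only [seg_s, seg_f]; linarith))
    have h := wins_of_descend (hZ (n - 1) (by omega)) (by omega)
      (hSP.append_insert hMRfree) hkeep
      ((((hfree.mono (by linarith) (by linarith)).insert (Or.inl (by rw [seg_f]; linarith))).insert
        (Or.inr le_rfl)))
    exact h.mono (by rw [hMRfree.card_insert, hPfree.card_insert]; omega)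
  · have h := hM n (by omega) A _ _ j _ (hSP.append _) (by omega) hswitch
      ((hfree.mono (by linarith) (by linarith)).insert (Or.inl (by rw [seg_f]; linarith)))
    exact h.mono (by rw [hPfree.card_insert]; omega)

theorem zoneWins (hZ : ∀ m < n, ZoneWins k m) (hF : LatchWins k n) : ZoneWins k n := by
  intro A σ S j a b hS hslack hcard hcover hfree hwidth
  cases n with
  | zero => exact hS.wins hcard
  | succ n =>
  push_cast at hwidth
  have hℓ := len_pos k j
  have hp : 0 ≤ (n : ℝ) * pitch k j := by unfold pitch; positivity
  have hrad := radius_le_half_pitch (k := k) j (show n + 1 ≤ 2 * k by omega)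
  push_cast at hrad
  have hnℓ : 0 ≤ (n : ℝ) * len k j := by positivity
  refine Wins.of_append (I := seg k j (a + pitch k j / 2)) ?_ (length_seg_mem _ (by omega))
  by_cases hheld : seg k j (a + pitch k j / 2) ∈ A.run (σ ++ [seg k j (a + pitch k j / 2)])
  · refine hF A _ S j (a + pitch k j / 2) (hS.append _) hslack ?_
      (hfree.mono (by push_cast; linarith) (by push_cast; linarith))
    refine A.run_append_eq_singleton hheld fun Y hY => ⟨a + pitch k j / 2, ?_, hcover Y hY ?_⟩
    · simp [Ivl.toSet, hℓ]
    · exact ⟨by linarith, by linarith⟩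
  · have hsub := (Finset.subset_insert_iff_of_notMem hheld).1 (A.revocable σ _)
    have hTfree := avoids_seg k j (y := a + pitch k j / 2) hfree (by linarith) (by linarith)
    have h := hZ n (by omega) A _ _ j (a + pitch k j) b
      (hS.append_insert hTfree)
      (by omega) ((Finset.card_le_card hsub).trans hcard)
      (fun Y hY => (Set.Ico_subset_Ico_left (by linarith)).trans (hcover Y (hsub hY)))
      ((hfree.mono (by linarith) le_rfl).insert (Or.inl (by rw [seg_f]; linarith))) (by linarith)
    exact h.mono (by rw [hTfree.card_insert]; omega)

theorem allWins (k n : ℕ) :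
    ZoneWins k n ∧ LatchWins k n ∧ MarchWins k n ∧ SpareMarchWins k n := by
  induction n using Nat.strong_induction_on with
  | _ n ih =>
    have hZ : ∀ m < n, ZoneWins k m := fun m hm => (ih m hm).1
    have hM : ∀ m < n, MarchWins k m := fun m hm => (ih m hm).2.2.1
    have hT := spareMarchWins hZ hM
    have hF := latchWins hZ hM hT
    exact ⟨zoneWins hZ hF, hF, marchWins hZ hT, hT⟩

end Moves

theorem wins_two_mul (A : OnlineAlg) (k : ℕ) : Wins A (levels k) [] (2 * k) := by
  have h := (allWins k (2 * k)).1 A [] ∅ 0 0 ((2 * k + 1) * pitch k 0)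
    (by simp [IsPacking, Ivl.Feasible]) (by omega) (by simp [A.run_nil]) (by simp [A.run_nil])
    (by simp [Avoids]) (by simp)
  simpa using h

end Adversary

theorem deterministic_lower_bound_two_k_general (A : OnlineAlg) (k : ℕ) :
    ∃ σ : List Ivl, (σ.map Ivl.length).toFinset.card ≤ k ∧
      (A.run σ).card ≤ 1 ∧ 2 * k ≤ opt σ := by
  obtain ⟨σ, hlen, hrun, hopt⟩ := Adversary.wins_two_mul A k
  refine ⟨σ, ?_, by simpa using hrun, by simpa using hopt⟩
  refine (Finset.card_le_card fun r hr => ?_).trans (Adversary.card_levels_le k)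
  obtain ⟨I, hI, rfl⟩ := List.mem_map.1 (List.mem_toFinset.1 hr)
  exact hlen I hI

/-- No deterministic online algorithm with revocable acceptances achieves a competitive ratio
better than `2k` for unweighted interval selection with `k` distinct lengths: there is an
instance with at most `k` distinct lengths on which the algorithm keeps at most one interval
while the optimum is at least `2k`. -/
theorem deterministic_lower_bound_two_k (A : OnlineAlg) (k : ℕ) (hk : 1 ≤ k) :
    ∃ σ : List Ivl, (σ.map Ivl.length).toFinset.card ≤ k ∧
      (A.run σ).card ≤ 1 ∧ 2 * k ≤ opt σ :=
  deterministic_lower_bound_two_k_general A k
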